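/- arXiv:1501.03657 — 9 statements merged into one kernel-verified Lean document; each statement's English description precedes it below -/
import Mathlib

section
/- Let Q be a Lie ring such that for every x in Q the maps y ↦ y + [x,y] and y ↦ y − [x,y] are bijective. Then the operation x∘y = x + y − [x,y] makes Q a loop with identity element 0. -/
/-- If `Q` is a Lie ring such that for every `x` the maps
`y ↦ y + ⁅x,y⁆` and `y ↦ y - ⁅x,y⁆` are bijective, then
`x ∘ y = x + y - ⁅x,y⁆` makes `Q` a loop with identity `0`. -/
theorem lie_ring_loop (Q : Type*) [LieRing Q]
    (h : ∀ x : Q, Function.Bijective (fun y : Q => y + ⁅x, y⁆) ∧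
      Function.Bijective (fun y : Q => y - ⁅x, y⁆)) :
    (∀ x : Q, (0 : Q) + x - ⁅(0 : Q), x⁆ = x ∧ x + (0 : Q) - ⁅x, (0 : Q)⁆ = x) ∧
    (∀ a b : Q, (∃! x : Q, a + x - ⁅a, x⁆ = b) ∧ (∃! y : Q, y + a - ⁅y, a⁆ = b)) := by
  have key : ∀ y a : Q, y + a - ⁅y, a⁆ = y + ⁅a, y⁆ + a := by
    intro y a
    rw [← lie_skew a y]
    abel
  constructor
  · intro x; simp
  · intro a b
    constructor
    · obtain ⟨x, hx⟩ := (h a).2.surjective (b - a)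
      simp only at hx
      refine ⟨x, ?_, ?_⟩
      · show a + x - ⁅a, x⁆ = b
        rw [add_sub_assoc, hx]; abel
      · intro y hy
        apply (h a).2.injective
        simp only [hx, eq_sub_iff_add_eq, add_comm, ← add_sub_assoc]
        exact hy
    · obtain ⟨x, hx⟩ := (h a).1.surjective (b - a)
      simp only at hx
      refine ⟨x, ?_, ?_⟩
      · show x + a - ⁅x, a⁆ = b
        rw [key, hx]; abel
      · intro y hy
        apply (h a).1.injective
        rw [key] at hy
        show y + ⁅a, y⁆ = x + ⁅a, x⁆
        rw [hx]
        exact eq_sub_of_add_eq hy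
end

section
/- Let H, K be 𝔽₂-vector spaces and β : H → End(K) linear such that the β(i) pairwise commute and id + β(i) is invertible for each i ∈ H. Then the operation (a⊕i) * (b⊕j) = (a + b + β(j)a + β(i)b) ⊕ (i+j) on Q = K ⊕ H defines a loop: for fixed u ∈ Q, both x ↦ u*x and x ↦ x*u are bijections of Q. -/
/-- With `(a⊕i) * (b⊕j) = (a + b + β j a + β i b) ⊕ (i+j)` on
`Q = K ⊕ H`, where the `β i` pairwise commute and `id + β i` is invertible
for each `i`, the operation defines a loop: all left and right translations
are bijections of `Q`. -/
theorem translations_bijective (K H : Type*)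
    [AddCommGroup K] [Module (ZMod 2) K] [AddCommGroup H] [Module (ZMod 2) H]
    (β : H →ₗ[ZMod 2] Module.End (ZMod 2) K)
    (hcomm : ∀ i j : H, Commute (β i) (β j))
    (hinv : ∀ i : H, IsUnit (1 + β i)) :
    (let m : K × H → K × H → K × H :=
       fun x y => (x.1 + y.1 + β y.2 x.1 + β x.2 y.1, x.2 + y.2)
     ∀ u : K × H, Function.Bijective (fun x => m u x) ∧
       Function.Bijective (fun x => m x u)) := by
  intro m u
  have hf : Function.Bijective ⇑(1 + β u.2 : Module.End (ZMod 2) K) :=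
    (Module.End.isUnit_iff _).mp (hinv u.2)
  have happ : ∀ b : K, (1 + β u.2 : Module.End (ZMod 2) K) b = b + β u.2 b := by
    intro b; simp
  constructor
  · constructor
    · rintro ⟨b, j⟩ ⟨c, k⟩ h
      simp only [m, Prod.mk.injEq] at h
      obtain ⟨h1, h2⟩ := h
      have hjk : j = k := by
        exact add_left_cancel h2
      subst hjk
      have : (1 + β u.2 : Module.End (ZMod 2) K) b =
          (1 + β u.2 : Module.End (ZMod 2) K) c := by
        rw [happ, happ]
        have h := h1
        rw [show u.1 + b + β j u.1 + β u.2 b = (b + β u.2 b) + (u.1 + β j u.1) by abel,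
          show u.1 + c + β j u.1 + β u.2 c = (c + β u.2 c) + (u.1 + β j u.1) by abel] at h
        exact add_right_cancel h
      exact Prod.ext (hf.1 this) rfl
    · rintro ⟨c, k⟩
      obtain ⟨b, hb⟩ := hf.2 (c - u.1 - β (k - u.2) u.1)
      refine ⟨(b, k - u.2), ?_⟩
      simp only [m, Prod.mk.injEq]
      constructor
      · rw [happ] at hb
        rw [show u.1 + b + β (k - u.2) u.1 + β u.2 b
            = (b + β u.2 b) + u.1 + β (k - u.2) u.1 by abel, hb]
        abel
      · abel
  · constructor
    · rintro ⟨b, j⟩ ⟨c, k⟩ h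
      simp only [m, Prod.mk.injEq] at h
      obtain ⟨h1, h2⟩ := h
      have hjk : j = k := add_right_cancel h2
      subst hjk
      have : (1 + β u.2 : Module.End (ZMod 2) K) b =
          (1 + β u.2 : Module.End (ZMod 2) K) c := by
        rw [happ, happ]
        have h := h1
        rw [show b + u.1 + β u.2 b + β j u.1 = (b + β u.2 b) + (u.1 + β j u.1) by abel,
          show c + u.1 + β u.2 c + β j u.1 = (c + β u.2 c) + (u.1 + β j u.1) by abel] at h
        exact add_right_cancel h
      exact Prod.ext (hf.1 this) rfl
    · rintro ⟨c, k⟩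
      obtain ⟨b, hb⟩ := hf.2 (c - u.1 - β (k - u.2) u.1)
      refine ⟨(b, k - u.2), ?_⟩
      simp only [m, Prod.mk.injEq]
      constructor
      · rw [happ] at hb
        rw [show b + u.1 + β u.2 b + β (k - u.2) u.1
            = (b + β u.2 b) + u.1 + β (k - u.2) u.1 by abel, hb]
        abel
      · abel
end

section
/- Let H, K, β be as in the construction (β linear, β(i) pairwise commuting, id + β(i) invertible for all i). In the Lie algebra Q = K ⊕ H with bracket [a⊕i, b⊕j] = (β(j)a + β(i)b) ⊕ 0, the map id + ad_{a⊕i} is invertible if and only if id + β(i) is invertible, for all a ∈ K, i ∈ H. -/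
/-- In the Lie algebra `Q = K ⊕ H` with bracket
`[a⊕i, b⊕j] = (β j a + β i b) ⊕ 0` (β linear, `β i` pairwise commuting,
`id + β i` invertible for all `i`), the map `id + ad_{a⊕i}` is invertible
iff `id + β i` is invertible, for all `a ∈ K`, `i ∈ H`. -/
theorem id_add_ad_invertible_iff (K H : Type*)
    [AddCommGroup K] [Module (ZMod 2) K] [AddCommGroup H] [Module (ZMod 2) H]
    (β : H →ₗ[ZMod 2] Module.End (ZMod 2) K)
    (hcomm : ∀ i j : H, Commute (β i) (β j))
    (hinv : ∀ i : H, IsUnit (1 + β i)) :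
    ∀ (a : K) (i : H),
      (Function.Bijective (fun y : K × H =>
        y + (β y.2 a + β i y.1, (0 : H))) ↔
       Function.Bijective (fun b : K => b + β i b)) := by
  intro a i
  have hu := hinv i
  have hbij : Function.Bijective (⇑(1 + β i)) := (Module.End.isUnit_iff _).mp hu
  have hcoe : ⇑(1 + β i) = fun b : K => b + β i b := by
    funext b; simp
  have hml : (↑hu.unit⁻¹ * (1 + β i) : Module.End (ZMod 2) K) = 1 := by
    exact hu.val_inv_mul
  have hmr : ((1 + β i) * ↑hu.unit⁻¹ : Module.End (ZMod 2) K) = 1 := by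
    exact hu.mul_val_inv
  have hinv_left : ∀ x : K, (↑hu.unit⁻¹ : Module.End (ZMod 2) K) ((1 + β i) x) = x := by
    intro x
    rw [← Module.End.mul_apply, hml, Module.End.one_apply]
  have hinv_right : ∀ x : K, (1 + β i) ((↑hu.unit⁻¹ : Module.End (ZMod 2) K) x) = x := by
    intro x
    rw [← Module.End.mul_apply, hmr, Module.End.one_apply]
  constructor
  · intro _
    rw [← hcoe]; exact hbij
  · intro _
    rw [Function.bijective_iff_has_inverse]
    refine ⟨fun c => ((↑hu.unit⁻¹ : Module.End (ZMod 2) K) (c.1 - β c.2 a), c.2), ?_, ?_⟩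
    · intro y
      have h1 : (y.1 + (β y.2 a + β i y.1) - β y.2 a) = (1 + β i) y.1 := by
        simp [LinearMap.add_apply]; abel
      refine Prod.ext ?_ ?_
      · show (↑hu.unit⁻¹ : Module.End (ZMod 2) K)
          ((y.1 + (β y.2 a + β i y.1)) - β (y.2 + 0) a) = y.1
        rw [add_zero, h1, hinv_left]
      · show y.2 + 0 = y.2
        exact add_zero _
    · intro c
      have h2 : (1 + β i) ((↑hu.unit⁻¹ : Module.End (ZMod 2) K) (c.1 - β c.2 a)) = c.1 - β c.2 a :=
        hinv_right _
      simp only [LinearMap.add_apply, Module.End.one_apply] at h2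
      refine Prod.ext ?_ ?_
      · show (↑hu.unit⁻¹ : Module.End (ZMod 2) K) (c.1 - β c.2 a) +
          (β c.2 a + β i ((↑hu.unit⁻¹ : Module.End (ZMod 2) K) (c.1 - β c.2 a))) = c.1
        rw [show (↑hu.unit⁻¹ : Module.End (ZMod 2) K) (c.1 - β c.2 a) +
            (β c.2 a + β i ((↑hu.unit⁻¹ : Module.End (ZMod 2) K) (c.1 - β c.2 a))) =
            ((↑hu.unit⁻¹ : Module.End (ZMod 2) K) (c.1 - β c.2 a) +
            β i ((↑hu.unit⁻¹ : Module.End (ZMod 2) K) (c.1 - β c.2 a))) + β c.2 a from by abel,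
          h2]
        abel
      · show c.2 + 0 = c.2
        exact add_zero _
end

section
/- Let H, K be 𝔽₂-vector spaces and β : H → End(K) linear with β(i)β(j) = β(j)β(i) and id+β(i) invertible for all i,j. Define φ_{i,j} = (id+β(i+j))^{-1}(id+β(i))(id+β(j)) and u(a⊕i) = ((id+β(i))a) ⊕ i. Then u((a⊕i) ∗' (b⊕j)) = u(a⊕i) * u(b⊕j), where (a⊕i) ∗' (b⊕j) = φ_{i,j}(a+b) ⊕ (i+j) and * is given by (a⊕i)*(b⊕j) = (a+b+β(j)a+β(i)b)⊕(i+j); i.e., u is an isomorphism between the two magmas on K ⊕ H. -/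
/-- With `φ_{i,j} = (id+β(i+j))⁻¹(id+β i)(id+β j)` (here
characterized by `(id+β(i+j)) * φ_{i,j} = (id+β i)(id+β j)`) and
`u(a⊕i) = ((id+β i)a) ⊕ i`, the map `u` intertwines
`(a⊕i) ∗' (b⊕j) = φ_{i,j}(a+b) ⊕ (i+j)` with
`(a⊕i) * (b⊕j) = (a+b+β j a+β i b) ⊕ (i+j)`:
`u ((a⊕i) ∗' (b⊕j)) = u(a⊕i) * u(b⊕j)`. -/
theorem u_is_isomorphism (K H : Type*)
    [AddCommGroup K] [Module (ZMod 2) K] [AddCommGroup H] [Module (ZMod 2) H]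
    (β : H →ₗ[ZMod 2] Module.End (ZMod 2) K)
    (hcomm : ∀ i j : H, Commute (β i) (β j))
    (hinv : ∀ i : H, IsUnit (1 + β i))
    (φ : H → H → Module.End (ZMod 2) K)
    (hφ : ∀ i j : H, (1 + β (i + j)) * φ i j = (1 + β i) * (1 + β j)) :
    (let m : K × H → K × H → K × H :=
       fun x y => (x.1 + y.1 + β y.2 x.1 + β x.2 y.1, x.2 + y.2)
     let m' : K × H → K × H → K × H :=
       fun x y => (φ x.2 y.2 (x.1 + y.1), x.2 + y.2)
     let u : K × H → K × H := fun x => (x.1 + β x.2 x.1, x.2)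
     ∀ x y : K × H, u (m' x y) = m (u x) (u y)) := by
  intro m m' u
  rintro ⟨a, i⟩ ⟨b, j⟩
  simp only [m, m', u, Prod.mk.injEq, and_true]
  have key := congrArg (fun f : Module.End (ZMod 2) K => f (a + b)) (hφ i j)
  simp only [Module.End.mul_apply, LinearMap.add_apply, Module.End.one_apply] at key
  have hc := congrArg (fun f : Module.End (ZMod 2) K => f a) (hcomm i j)
  simp only [Module.End.mul_apply] at hc
  rw [key]; simp only [map_add, hc]
  abel
end

section
/- Let H, K, β be as in the construction (β linear, β(i) pairwise commuting, id+β(i) invertible). In the loop (Q,*) on Q = K⊕H, an element 0 ⊕ i with i ∈ H is central if and only if β(i)β(j) = 0 for all j ∈ H. -/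
/-- In the loop `(Q,*)` on `Q = K ⊕ H` with
`(a⊕i)*(b⊕j) = (a+b+β j a+β i b)⊕(i+j)` (β linear, `β i` pairwise commuting,
`id+β i` invertible), an element `0 ⊕ i` with `i ∈ H` is central
(i.e. `(z*x)*y = z*(x*y)` for all `x,y`) iff `β i β j = 0` for all `j ∈ H`. -/
theorem central_in_H_iff (K H : Type*)
    [AddCommGroup K] [Module (ZMod 2) K] [AddCommGroup H] [Module (ZMod 2) H]
    (β : H →ₗ[ZMod 2] Module.End (ZMod 2) K)
    (hcomm : ∀ i j : H, Commute (β i) (β j))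
    (hinv : ∀ i : H, IsUnit (1 + β i)) :
    (let m : K × H → K × H → K × H :=
       fun x y => (x.1 + y.1 + β y.2 x.1 + β x.2 y.1, x.2 + y.2)
     ∀ i : H, (∀ x y : K × H, m (m (0, i) x) y = m (0, i) (m x y)) ↔
       (∀ j : H, β i * β j = 0)) := by
  have hK : ∀ a : K, a + a = 0 := by
    intro a
    have h := two_smul (ZMod 2) a
    have : (2 : ZMod 2) = 0 := rfl
    rw [this, zero_smul] at h
    exact h.symm
  intro m i
  constructor
  · intro h j
    ext c
    have := congrArg Prod.fst (h (0, j) (c, 0))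
    simp only [m, map_zero, map_add, LinearMap.zero_apply] at this ⊢
    simp only [add_zero, zero_add, map_zero] at this
    -- this should reduce to β i (β j c) = 0 modulo char 2
    have hc : (β i * β j) c = β i (β j c) := rfl
    rw [hc]
    have key : (β i) ((β j) c) =
        (c + ((β j) c + ((β i) c + (β i) ((β j) c)))) - (c + (β i + β j) c) := by
      simp only [LinearMap.add_apply]
      abel
    rw [key, this]; abel
  · intro h x y
    have h1 : (β i) ((β x.2) y.1) = 0 := by
      have : (β i * β x.2) y.1 = (0 : Module.End (ZMod 2) K) y.1 := by rw [h x.2]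
      simpa using this
    have h2 : (β y.2) ((β i) x.1) = (β i) ((β y.2) x.1) :=
      DFunLike.congr_fun (hcomm y.2 i) x.1
    simp only [m, map_add, map_zero, add_zero, zero_add]
    refine Prod.ext ?_ (by abel)
    simp only [map_add, LinearMap.add_apply, h1, h2, add_zero]
    abel
end

section
/- Let H, K, β be as in the construction (β linear, β(i) pairwise commuting, id+β(i) invertible for all i). If β is injective and β(j₀) is invertible for at least one j₀ ∈ H, then the loop (Q,*) on K ⊕ H has trivial center: the only central element is 0. -/
/-- If in addition `β` is injective and `β j₀` is invertible for
at least one `j₀ ∈ H`, then the loop `(Q,*)` on `K ⊕ H` with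
`(a⊕i)*(b⊕j) = (a+b+β j a+β i b)⊕(i+j)` has trivial center: the only central
element (satisfying `(z*x)*y = z*(x*y)` for all `x,y`) is `0`. -/
theorem trivial_center (K H : Type*)
    [AddCommGroup K] [Module (ZMod 2) K] [AddCommGroup H] [Module (ZMod 2) H]
    (β : H →ₗ[ZMod 2] Module.End (ZMod 2) K)
    (hcomm : ∀ i j : H, Commute (β i) (β j))
    (hinv : ∀ i : H, IsUnit (1 + β i))
    (hinj : Function.Injective β)
    (hunit : ∃ j₀ : H, IsUnit (β j₀)) :
    (let m : K × H → K × H → K × H :=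
       fun x y => (x.1 + y.1 + β y.2 x.1 + β x.2 y.1, x.2 + y.2)
     ∀ z : K × H, (∀ x y : K × H, m (m z x) y = m z (m x y)) → z = 0) := by
  intro m z h
  obtain ⟨j₀, hj₀⟩ := hunit
  obtain ⟨a, i⟩ := z
  have two : ∀ x : K, x + x = 0 := by
    intro x
    have h2 : (2 : ZMod 2) • x = x + x := two_smul _ x
    rw [show (2 : ZMod 2) = 0 from rfl, zero_smul] at h2
    exact h2.symm
  have key : ∀ (c : K) (j k : H), β k (β j a) + β i (β j c) = 0 := by
    intro c j k
    have h1 := congrArg Prod.fst (h (0, j) (c, k))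
    simp only [m, map_add, map_zero, add_zero, zero_add] at h1
    simp only [LinearMap.add_apply] at h1
    have h2 := sub_eq_zero_of_eq h1
    abel_nf at h2
    rw [neg_one_smul, neg_eq_of_add_eq_zero_left (two _)] at h2
    exact h2
  -- a = 0
  have hinjβ : ∀ {j : H}, IsUnit (β j) → Function.Injective (β j) := by
    intro j hj
    exact ((Module.End.isUnit_iff _).mp hj).injective
  have ha : a = 0 := by
    have h0 := key 0 j₀ j₀
    simp only [map_zero, add_zero] at h0
    exact hinjβ hj₀ (by simpa using hinjβ hj₀ (by simpa using h0))
  have hi : i = 0 := by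
    apply hinj
    rw [map_zero]
    apply LinearMap.ext
    intro y
    obtain ⟨c, rfl⟩ := ((Module.End.isUnit_iff _).mp hj₀).surjective y
    have h0 := key c j₀ 0
    rw [ha] at h0
    simpa using h0
  simp [ha, hi]
end

section
/- Let H, K, β be as in the construction. Then the center of the loop (Q,*) on Q = K⊕H decomposes as Z(Q) = (K ∩ Z(Q)) ⊕ (H ∩ Z(Q)); that is, a⊕i is central if and only if a⊕0 and 0⊕i are both central. -/
/-- In the loop `(Q,*)` on `Q = K ⊕ H` with
`(a⊕i)*(b⊕j) = (a+b+β j a+β i b)⊕(i+j)` (β linear, `β i` pairwise commuting,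
`id+β i` invertible), the center decomposes:
`a ⊕ i` is central iff both `a ⊕ 0` and `0 ⊕ i` are central. -/
theorem center_decomposes (K H : Type*)
    [AddCommGroup K] [Module (ZMod 2) K] [AddCommGroup H] [Module (ZMod 2) H]
    (β : H →ₗ[ZMod 2] Module.End (ZMod 2) K)
    (hcomm : ∀ i j : H, Commute (β i) (β j))
    (hinv : ∀ i : H, IsUnit (1 + β i)) :
    (let m : K × H → K × H → K × H :=
       fun x y => (x.1 + y.1 + β y.2 x.1 + β x.2 y.1, x.2 + y.2)
     ∀ (a : K) (i : H),
       (∀ x y : K × H, m (m (a, i) x) y = m (a, i) (m x y)) ↔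
       ((∀ x y : K × H, m (m (a, 0) x) y = m (a, 0) (m x y)) ∧
        (∀ x y : K × H, m (m (0, i) x) y = m (0, i) (m x y)))) := by
  intro m a₀ i₀
  have hself : ∀ x : K, x + x = 0 := fun x => by
    rw [← two_smul (ZMod 2) x, show (2:ZMod 2) = 0 from rfl, zero_smul]
  have hneg : ∀ x : K, -x = x := fun x => neg_eq_of_add_eq_zero_left (hself x)
  have key : ∀ (a : K) (i : H),
      (∀ x y : K × H, m (m (a, i) x) y = m (a, i) (m x y)) ↔
      (∀ (j k : H) (c : K), β k (β j a) + β i (β j c) = 0) := by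
    intro a i
    constructor
    · intro h j k c
      have H1 := (Prod.mk.injEq _ _ _ _ ▸ h (0, j) (c, k)).1
      simp only [m, map_add, map_zero, LinearMap.zero_apply, add_zero, zero_add] at H1
      have e := sub_eq_zero.mpr H1
      simp only [LinearMap.add_apply] at e
      abel_nf at e
      rw [neg_one_smul, hneg] at e
      exact e
    · intro h x y
      obtain ⟨b, j⟩ := x
      obtain ⟨c, k⟩ := y
      simp only [m, Prod.mk.injEq]
      refine ⟨?_, by abel⟩
      have hc : β k (β i b) = β i (β k b) := by
        have := LinearMap.congr_fun (hcomm i k).eq b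
        simpa [Module.End.mul_apply] using this.symm
      have hxy : β k (β j a) = β i (β j c) := by
        rw [eq_neg_of_add_eq_zero_left (h j k c), hneg]
      simp only [map_add, LinearMap.add_apply]
      rw [hxy, hc]
      abel
  rw [key a₀ i₀, key a₀ 0, key 0 i₀]
  constructor
  · intro h
    have hA : ∀ j k, β k (β j a₀) = 0 := fun j k => by simpa using h j k 0
    have hB : ∀ j c, β i₀ (β j c) = 0 := fun j c => by
      have := h j j c
      rw [hA] at this
      simpa using this
    exact ⟨fun j k c => by simp [hA], fun j k c => by simp [hB]⟩
  · rintro ⟨h1, h2⟩ j k c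
    have hA : β k (β j a₀) = 0 := by simpa using h1 j k 0
    have hB : β i₀ (β j c) = 0 := by simpa using h2 j k c
    simp [hA, hB]
end

section
/- Let K be a field of characteristic 2, H a proper subfield, σ ∈ K \ H, and define on Q = K × H the operation (a,i)*(b,j) = (a + b + σja + σib, i + j). Then (Q,*) is a commutative loop of exponent 2 with identity (0,0) and trivial center. -/
/-- Let `K` be a field of characteristic 2, `H` a proper
subfield, `σ ∈ K \ H`, and define on `Q = K × H` the operation
`(a,i)*(b,j) = (a + b + σ j a + σ i b, i + j)`. Then `(Q,*)` is a commutative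
loop of exponent 2 with identity `(0,0)` and trivial center. -/
theorem example_loop_trivial_center (K : Type*) [Field K] [CharP K 2]
    (H : Subfield K) (hH : H ≠ ⊤) (σ : K) (hσ : σ ∉ H) :
    (let m : K × H → K × H → K × H :=
       fun x y => (x.1 + y.1 + σ * (y.2 : K) * x.1 + σ * (x.2 : K) * y.1,
         x.2 + y.2)
     (∀ x y : K × H, m x y = m y x) ∧
     (∀ x : K × H, m 0 x = x ∧ m x 0 = x) ∧
     (∀ x : K × H, m x x = 0) ∧
     (∀ u : K × H, Function.Bijective (fun x => m u x) ∧
        Function.Bijective (fun x => m x u)) ∧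
     (∀ z : K × H, (∀ x y : K × H, m (m z x) y = m z (m x y)) → z = 0)) := by
  intro m
  have h2 : (2 : K) = 0 := CharP.cast_eq_zero K 2
  have hσ0 : σ ≠ 0 := fun h => hσ (h ▸ H.zero_mem)
  have hne : ∀ i : H, (1 : K) + σ * (i : K) ≠ 0 := by
    intro i h
    by_cases hi : (i : K) = 0
    · simp [hi] at h
    · apply hσ
      have : σ = (i : K)⁻¹ := by
        field_simp
        linear_combination h - h2
      rw [this]
      exact H.inv_mem i.2
  have hcomm : ∀ x y : K × H, m x y = m y x := by
    intro x y
    simp only [m, Prod.mk.injEq]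
    constructor
    · ring
    · exact add_comm _ _
  refine ⟨hcomm, ?_, ?_, ?_, ?_⟩
  · intro x
    constructor
    · simp [m]
    · simp [m]
  · intro x
    simp only [m, Prod.ext_iff, Prod.fst_zero, Prod.snd_zero]
    constructor
    · linear_combination (x.1 + σ * (x.2 : K) * x.1) * h2
    · apply Subtype.ext
      push_cast
      linear_combination (x.2 : K) * h2
  · have key : ∀ u : K × H, Function.Bijective (fun x => m u x) := by
      intro u
      rw [Function.bijective_iff_has_inverse]
      refine ⟨fun y => ((y.1 - u.1 - σ * ((y.2 - u.2 : H) : K) * u.1) /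
        (1 + σ * (u.2 : K)), y.2 - u.2), ?_, ?_⟩
      · intro x
        simp only [m]
        have h1 := hne u.2
        apply Prod.ext
        · simp only
          push_cast
          field_simp
          ring
        · simp
      · intro y
        simp only [m]
        have h1 := hne u.2
        apply Prod.ext
        · simp only
          push_cast
          field_simp
          ring
        · simp
    intro u
    refine ⟨key u, ?_⟩
    have : (fun x => m x u) = (fun x => m u x) := by
      funext x; exact hcomm x u
    rw [this]
    exact key u
  · intro z hz
    -- First: z.1 = 0 using x = (0,1), y = (0,1)
    have e1 := congrArg Prod.fst (hz (0, 1) (0, 1))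
    simp only [m] at e1
    push_cast at e1
    have hc : z.1 = 0 := by
      have hs2 : σ * σ * z.1 = 0 := by linear_combination e1
      rcases mul_eq_zero.mp hs2 with h | h
      · exact (mul_ne_zero hσ0 hσ0 h).elim
      · exact h
    have e2 := congrArg Prod.fst (hz (0, 1) (1, 0))
    simp only [m] at e2
    push_cast at e2
    rw [hc] at e2
    have hk : (z.2 : K) = 0 := by
      have hs2 : σ * σ * (z.2 : K) = 0 := by linear_combination -e2
      rcases mul_eq_zero.mp hs2 with h | h
      · exact (mul_ne_zero hσ0 hσ0 h).elim
      · exact h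
    apply Prod.ext
    · exact hc
    · exact Subtype.ext hk
end

section
/- Let H, K be abelian groups and Φ = {φ_{i,j} ∈ Aut(K) : i,j ∈ H} a family of automorphisms satisfying φ_{i,j} = φ_{j,i} and φ_{0,i} = id_K for all i,j. Then the operation (a,i) ⋆ (b,j) = (φ_{i,j}(a+b), i+j) on Q = K × H is a commutative loop with identity (0,0), and K × {0} is a subloop isomorphic to K, {0} × H is a subloop isomorphic to H. -/
section NuclearProduct

variable {K H : Type*} [AddCommGroup K] [AddCommGroup H] (φ : H → H → AddAut K)

def nuclearMul (x y : K × H) : K × H :=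
  (φ x.2 y.2 (x.1 + y.1), x.2 + y.2)

theorem nuclearMul_comm (hsymm : ∀ i j : H, φ i j = φ j i) (x y : K × H) :
    nuclearMul φ x y = nuclearMul φ y x := by
  simp only [nuclearMul, hsymm x.2 y.2, add_comm]

theorem nuclearMul_zero_left (hzero : ∀ i : H, φ 0 i = 0) (x : K × H) :
    nuclearMul φ 0 x = x := by
  simp [nuclearMul, hzero]

theorem nuclearMul_zero_right (hsymm : ∀ i j : H, φ i j = φ j i)
    (hzero : ∀ i : H, φ 0 i = 0) (x : K × H) : nuclearMul φ x 0 = x := by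
  rw [nuclearMul_comm φ hsymm, nuclearMul_zero_left φ hzero]

def nuclearMulLeft (u : K × H) : K × H ≃ K × H where
  toFun := nuclearMul φ u
  invFun y := ((φ u.2 (y.2 - u.2)).symm y.1 - u.1, y.2 - u.2)
  left_inv x := by simp [nuclearMul]
  right_inv y := by simp [nuclearMul]

def nuclearMulRight (u : K × H) : K × H ≃ K × H where
  toFun x := nuclearMul φ x u
  invFun y := ((φ (y.2 - u.2) u.2).symm y.1 - u.1, y.2 - u.2)
  left_inv x := by simp [nuclearMul]
  right_inv y := by simp [nuclearMul]

theorem nuclearMul_inl (h : φ 0 0 = 0) (a b : K) :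
    nuclearMul φ (a, 0) (b, 0) = (a + b, 0) := by
  simp [nuclearMul, h]

theorem nuclearMul_inr (i j : H) : nuclearMul φ (0, i) (0, j) = (0, i + j) := by
  simp [nuclearMul]

end NuclearProduct

/-- Let `H, K` be abelian groups and `φ_{i,j} ∈ Aut K` with
`φ_{i,j} = φ_{j,i}` and `φ_{0,i} = id`. Then
`(a,i) ⋆ (b,j) = (φ_{i,j}(a+b), i+j)` on `Q = K × H` is a commutative loop
with identity `(0,0)` (translations are bijective), `K × {0}` is a subloop
isomorphic to `K` (via `a ↦ (a,0)`), and `{0} × H` is a subloop isomorphic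
to `H` (via `i ↦ (0,i)`). -/
theorem nuclear_product_loop (K H : Type*) [AddCommGroup K] [AddCommGroup H]
    (φ : H → H → AddAut K)
    (hsymm : ∀ i j : H, φ i j = φ j i)
    (hzero : ∀ i : H, φ 0 i = (0 : AddAut K)) :
    (let m : K × H → K × H → K × H :=
       fun x y => (φ x.2 y.2 (x.1 + y.1), x.2 + y.2)
     (∀ x y : K × H, m x y = m y x) ∧
     (∀ x : K × H, m 0 x = x ∧ m x 0 = x) ∧
     (∀ u : K × H, Function.Bijective (fun x => m u x) ∧
        Function.Bijective (fun x => m x u)) ∧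
     (∀ a b : K, m (a, 0) (b, 0) = (a + b, 0)) ∧
     (∀ i j : H, m (0, i) (0, j) = (0, i + j))) :=
  ⟨nuclearMul_comm φ hsymm,
    fun x => ⟨nuclearMul_zero_left φ hzero x, nuclearMul_zero_right φ hsymm hzero x⟩,
    fun u => ⟨(nuclearMulLeft φ u).bijective, (nuclearMulRight φ u).bijective⟩,
    nuclearMul_inl φ (hzero 0),
    nuclearMul_inr φ⟩
end
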